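/- Let Ω = cω + c₁ξ₁ + c₂ξ₂ + c₃ξ₃ + aθ as above. The linear map X ↦ Ω∧X from span{α₁∧β₁, α₁∧β₂, α₂∧β₁, α₂∧β₂, γ∧η} to the space of 4-forms is injective if and only if (c - c₂ - c₃)(c² - c₁² + a² + cc₂ + cc₃ + c₂c₃) ≠ 0. -/

import Mathlib

open ExteriorAlgebra

/-- The basis 1-forms α₁, β₁, α₂, β₂, γ, η of the exterior algebra over ℝ⁶. -/
noncomputable def e (i : Fin 6) : ExteriorAlgebra ℝ (Fin 6 → ℝ) :=
  ExteriorAlgebra.ι ℝ (Pi.single i 1)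

noncomputable def α₁ := e 0
noncomputable def β₁ := e 1
noncomputable def α₂ := e 2
noncomputable def β₂ := e 3
noncomputable def γ' := e 4
noncomputable def η' := e 5

/-- ω = α₁∧β₁ + α₂∧β₂ + γ∧η -/
noncomputable def ω : ExteriorAlgebra ℝ (Fin 6 → ℝ) := α₁ * β₁ + α₂ * β₂ + γ' * η'
/-- ξ₁ = α₁∧β₂ + α₂∧β₁ -/
noncomputable def ξ₁ : ExteriorAlgebra ℝ (Fin 6 → ℝ) := α₁ * β₂ + α₂ * β₁
/-- ξ₂ = α₁∧β₁ - γ∧η -/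
noncomputable def ξ₂ : ExteriorAlgebra ℝ (Fin 6 → ℝ) := α₁ * β₁ - γ' * η'
/-- ξ₃ = α₂∧β₂ - γ∧η -/
noncomputable def ξ₃ : ExteriorAlgebra ℝ (Fin 6 → ℝ) := α₂ * β₂ - γ' * η'
/-- θ = α₁∧β₂ - α₂∧β₁ -/
noncomputable def θ : ExteriorAlgebra ℝ (Fin 6 → ℝ) := α₁ * β₂ - α₂ * β₁

/-- Ω = cω + c₁ξ₁ + c₂ξ₂ + c₃ξ₃ + aθ -/
noncomputable def Ω (c c₁ c₂ c₃ a : ℝ) : ExteriorAlgebra ℝ (Fin 6 → ℝ) :=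
  c • ω + c₁ • ξ₁ + c₂ • ξ₂ + c₃ • ξ₃ + a • θ

/-!
In the basis of the statement,
`Ω = (c + c₂) α₁β₁ + (c₁ + a) α₁β₂ + (c₁ - a) α₂β₁ + (c + c₃) α₂β₂ + (c - c₂ - c₃) γη`.
The product of two such 2-forms is computed by sorting the generators; it lands in the span of
five 4-forms, and in these coordinates `X ↦ Ω ∧ X` is a 5 × 5 matrix with determinant
`-2 (c - c₂ - c₃)³ ((c + c₂)(c + c₃) - (c₁ + a)(c₁ - a))`, the second factor being
`c² - c₁² + a² + c c₂ + c c₃ + c₂ c₃`. Up to sign the five 2-forms and the five 4-forms are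
members of the standard basis of `⋀ ℝ⁶`, hence linearly independent, so the map is injective
exactly when this determinant does not vanish.
-/

open Matrix

theorem LinearMap.injective_restrict_span_iff_det_ne_zero {K A B ι : Type*} [Field K]
    [AddCommGroup A] [Module K A] [AddCommGroup B] [Module K B] [Fintype ι] [DecidableEq ι]
    (L : A →ₗ[K] B) {b : ι → A} {c : ι → B} (hb : LinearIndependent K b)
    (hc : LinearIndependent K c) (M : Matrix ι ι K)
    (hL : ∀ x, L (∑ i, x i • b i) = ∑ j, (M *ᵥ x) j • c j) :
    Function.Injective (fun x : Submodule.span K (Set.range b) => L x) ↔ M.det ≠ 0 := by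
  let β := Module.Basis.span hb
  have hcomp : (fun x : Submodule.span K (Set.range b) => L x) ∘ β.equivFun.symm =
      Fintype.linearCombination K c ∘ M.mulVec := by
    funext x
    simp [β, Module.Basis.equivFun_symm_apply, Module.Basis.span_apply, hL,
      Fintype.linearCombination_apply]
  rw [← EquivLike.injective_comp β.equivFun.symm, hcomp,
    Function.Injective.of_comp_iff (linearIndependent_iff_injective_fintypeLinearCombination.mp hc),
    Matrix.mulVec_injective_iff_isUnit, Matrix.isUnit_iff_isUnit_det, isUnit_iff_ne_zero]

open Set.powersetCard in
theorem ExteriorAlgebra.linearIndependent_ιMulti_comp {K E ι κ : Type*} [Field K]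
    [AddCommGroup E] [Module K E] [LinearOrder ι] {n : ℕ} {v : ι → E}
    (hv : LinearIndependent K v) {f : κ → Fin n → ι} (hf : ∀ k, StrictMono (f k))
    (hinj : Function.Injective f) :
    LinearIndependent K fun k => ιMulti K n (v ∘ f k) := by
  have hfam : LinearIndependent K (ιMulti_family K n v) :=
    (exteriorPower.ιMulti_family_linearIndependent_field (n := n) hv).map' _
      (Submodule.ker_subtype _)
  let g : κ → Set.powersetCard ι n :=
    fun k => ofFinEmbEquiv (OrderEmbedding.ofStrictMono _ (hf k))
  have hg : Function.Injective g := fun k l h => hinj <| by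
    simpa [g, DFunLike.ext'_iff] using ofFinEmbEquiv.injective h
  convert hfam.comp g hg with k
  simp only [Function.comp_apply, g, ιMulti_family, Equiv.symm_apply_apply]
  rfl

theorem e_mul_self (i : Fin 6) : e i * e i = 0 := ι_sq_zero _

theorem e_mul_self_mul (i : Fin 6) (x : ExteriorAlgebra ℝ (Fin 6 → ℝ)) :
    e i * (e i * x) = 0 := by
  rw [← mul_assoc, e_mul_self, zero_mul]

theorem e_mul_e_anticomm (i j : Fin 6) : e i * e j = -(e j * e i) :=
  eq_neg_of_add_eq_zero_left (ι_add_mul_swap _ _)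

theorem e_mul_e_mul_anticomm (i j : Fin 6) (x : ExteriorAlgebra ℝ (Fin 6 → ℝ)) :
    e i * (e j * x) = -(e j * (e i * x)) := by
  rw [← mul_assoc, e_mul_e_anticomm, neg_mul, mul_assoc]

noncomputable def twoForm : Fin 5 → ExteriorAlgebra ℝ (Fin 6 → ℝ) :=
  ![α₁ * β₁, α₁ * β₂, α₂ * β₁, α₂ * β₂, γ' * η']

noncomputable def fourForm : Fin 5 → ExteriorAlgebra ℝ (Fin 6 → ℝ) :=
  ![twoForm 0 * twoForm 3, twoForm 0 * twoForm 4, twoForm 1 * twoForm 4, twoForm 2 * twoForm 4,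
    twoForm 3 * twoForm 4]

def wedgeMatrix (y : Fin 5 → ℝ) : Matrix (Fin 5) (Fin 5) ℝ :=
  !![y 3, -y 2, -y 1, y 0, 0;
     y 4, 0, 0, 0, y 0;
     0, y 4, 0, 0, y 1;
     0, 0, y 4, 0, y 2;
     0, 0, 0, y 4, y 3]

theorem range_twoForm :
    Set.range twoForm = {α₁ * β₁, α₁ * β₂, α₂ * β₁, α₂ * β₂, γ' * η'} := by
  simp only [twoForm, Matrix.range_cons, Matrix.range_empty, Set.union_empty, Set.singleton_union]

theorem linearIndependent_twoForm : LinearIndependent ℝ twoForm := by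
  have hsorted := (ExteriorAlgebra.linearIndependent_ιMulti_comp
    (Pi.basisFun ℝ (Fin 6)).linearIndependent (f := ![![0, 1], ![0, 3], ![1, 2], ![2, 3], ![4, 5]])
    (fun k => by rw [Fin.strictMono_iff_lt_succ]; fin_cases k <;> decide) (by decide)).units_smul
    ![1, 1, -1, 1, 1]
  have hfam : twoForm = ![(1 : ℝˣ), 1, -1, 1, 1] • fun k =>
      ιMulti ℝ 2 (Pi.basisFun ℝ (Fin 6) ∘ ![![0, 1], ![0, 3], ![1, 2], ![2, 3], ![4, 5]] k) := by
    funext k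
    fin_cases k <;>
      simp [twoForm, ιMulti_apply, α₁, β₁, α₂, β₂, γ', η', vecTail, ← e.eq_1, e_mul_e_anticomm 2 1]
  rw [hfam]
  exact hsorted

theorem linearIndependent_fourForm : LinearIndependent ℝ fourForm := by
  have hsorted := (ExteriorAlgebra.linearIndependent_ιMulti_comp
    (Pi.basisFun ℝ (Fin 6)).linearIndependent
    (f := ![![0, 1, 2, 3], ![0, 1, 4, 5], ![0, 3, 4, 5], ![1, 2, 4, 5], ![2, 3, 4, 5]])
    (fun k => by rw [Fin.strictMono_iff_lt_succ]; fin_cases k <;> decide) (by decide)).units_smul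
    ![1, 1, 1, -1, 1]
  have hfam : fourForm = ![(1 : ℝˣ), 1, 1, -1, 1] • fun k =>
      ιMulti ℝ 4 (Pi.basisFun ℝ (Fin 6) ∘
        ![![0, 1, 2, 3], ![0, 1, 4, 5], ![0, 3, 4, 5], ![1, 2, 4, 5], ![2, 3, 4, 5]] k) := by
    funext k
    fin_cases k <;>
      simp [fourForm, twoForm, ιMulti_apply, α₁, β₁, α₂, β₂, γ', η', vecTail, ← e.eq_1,
        e_mul_e_mul_anticomm 2 1, mul_assoc]
  rw [hfam]
  exact hsorted

theorem sum_smul_twoForm_mul (x y : Fin 5 → ℝ) :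
    (∑ i, y i • twoForm i) * (∑ i, x i • twoForm i) =
      ∑ j, (wedgeMatrix y *ᵥ x) j • fourForm j := by
  -- The guard `j < i` only serves to make `simp` sort the generators and terminate.
  have swap (i j : Fin 6) (_ : j < i) : e i * e j = -(e j * e i) := e_mul_e_anticomm i j
  have swap_mul (i j : Fin 6) (_ : j < i) (z : ExteriorAlgebra ℝ (Fin 6 → ℝ)) :
      e i * (e j * z) = -(e j * (e i * z)) := e_mul_e_mul_anticomm i j z
  simp only [Fin.sum_univ_five, Matrix.mulVec, dotProduct, fourForm, twoForm, wedgeMatrix, α₁, β₁,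
    α₂, β₂, γ', η', of_apply, cons_val', cons_val_zero, cons_val_one, cons_val, cons_val_fin_one,
    neg_mul, zero_mul, add_zero, zero_add]
  simp (disch := decide) only [mul_add, add_mul, smul_mul_assoc, mul_smul_comm, mul_assoc, swap,
    swap_mul, e_mul_self, e_mul_self_mul, mul_neg, neg_mul, neg_neg, neg_zero, smul_neg, mul_zero,
    smul_zero, add_zero, zero_add]
  module

theorem Ω_eq_sum_smul_twoForm (c c₁ c₂ c₃ a : ℝ) :
    Ω c c₁ c₂ c₃ a = ∑ i, ![c + c₂, c₁ + a, c₁ - a, c + c₃, c - c₂ - c₃] i • twoForm i := by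
  simp only [Fin.sum_univ_five, Ω, ω, ξ₁, ξ₂, ξ₃, θ, twoForm, cons_val_zero, cons_val_one,
    cons_val]
  module

theorem det_wedgeMatrix (y : Fin 5 → ℝ) :
    (wedgeMatrix y).det = -(2 * y 4 ^ 3 * (y 0 * y 3 - y 1 * y 2)) := by
  simp [wedgeMatrix, Matrix.det_succ_row_zero, Fin.sum_univ_succ, Fin.succAbove]
  ring

/-- the linear map X ↦ Ω∧X on span{α₁∧β₁, α₁∧β₂, α₂∧β₁, α₂∧β₂, γ∧η}
is injective iff (c - c₂ - c₃)(c² - c₁² + a² + cc₂ + cc₃ + c₂c₃) ≠ 0. -/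
theorem stmt11 (c c₁ c₂ c₃ a : ℝ) :
    Function.Injective
      (fun x : Submodule.span ℝ
          ({α₁ * β₁, α₁ * β₂, α₂ * β₁, α₂ * β₂, γ' * η'} :
            Set (ExteriorAlgebra ℝ (Fin 6 → ℝ))) =>
        Ω c c₁ c₂ c₃ a * (x : ExteriorAlgebra ℝ (Fin 6 → ℝ)))
      ↔ (c - c₂ - c₃) * (c ^ 2 - c₁ ^ 2 + a ^ 2 + c * c₂ + c * c₃ + c₂ * c₃) ≠ 0 := by
  rw [← range_twoForm]
  have hmul (x : Fin 5 → ℝ) : LinearMap.mulLeft ℝ (Ω c c₁ c₂ c₃ a) (∑ i, x i • twoForm i) =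
      ∑ j, (wedgeMatrix ![c + c₂, c₁ + a, c₁ - a, c + c₃, c - c₂ - c₃] *ᵥ x) j • fourForm j := by
    rw [LinearMap.mulLeft_apply, Ω_eq_sum_smul_twoForm, sum_smul_twoForm_mul]
  refine (LinearMap.injective_restrict_span_iff_det_ne_zero _ linearIndependent_twoForm
    linearIndependent_fourForm _ hmul).trans ?_
  have hpoly : (c + c₂) * (c + c₃) - (c₁ + a) * (c₁ - a) =
      c ^ 2 - c₁ ^ 2 + a ^ 2 + c * c₂ + c * c₃ + c₂ * c₃ := by ring
  rw [det_wedgeMatrix]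
  simp only [Matrix.cons_val, hpoly]
  simp
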